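/- Let n ≥ 3 and 1 ≤ l < k ≤ n−2 be integers, and let λ ∈ ℝ^{n−1} satisfy σ_m(λ) ≥ 0 for all 1 ≤ m ≤ k. Let a_0, …, a_{l−1} and b_l, …, b_k be nonnegative real numbers such that Σ_{i=0}^{l−1} a_i H_i(λ) = Σ_{j=l}^{k} b_j H_j(λ) > 0. Then Σ_{j=l}^{k} b_j H_{j+1}(λ) ≤ Σ_{i=0}^{l−1} a_i H_{i+1}(λ). -/
import Mathlib


/-- The `k`-th elementary symmetric polynomial of `x ∈ ℝ^m`
(`σ_0 = 1`, `σ_k = 0` for `k > m`). -/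
noncomputable def esymmR (m : ℕ) (x : Fin m → ℝ) (k : ℕ) : ℝ :=
  ∑ s ∈ Finset.powersetCard k (Finset.univ : Finset (Fin m)), ∏ i ∈ s, x i

/-- The normalized `k`-th elementary symmetric function `H_k = σ_k / C(m,k)`
(`H_0 = 1`, `H_k = 0` for `k > m`). -/
noncomputable def Hnorm (m : ℕ) (x : Fin m → ℝ) (k : ℕ) : ℝ :=
  esymmR m x k / (m.choose k : ℝ)

/-- The point of `ℝ^{m-1}` obtained from `x ∈ ℝ^m` by deleting the `p`-th coordinate. -/
def deleteCoord {m : ℕ} (x : Fin m → ℝ) (p : Fin m) : Fin (m - 1) → ℝ :=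
  fun i => if (i : ℕ) < (p : ℕ) then x ⟨(i : ℕ), by have := i.isLt; omega⟩
           else x ⟨(i : ℕ) + 1, by have := i.isLt; omega⟩

open Finset

lemma esymmR_eq (m : ℕ) (x : Fin m → ℝ) (k : ℕ) :
    esymmR m x k = (Multiset.map x Finset.univ.val).esymm k := by
  rw [Finset.esymm_map_val]; rfl

lemma exists_fn (s : Multiset ℝ) (n : ℕ) (h : Multiset.card s = n) :
    ∃ x : Fin n → ℝ, Multiset.map x Finset.univ.val = s := by
  have h' : s.toList.length = n := (Multiset.length_toList s).trans h
  subst h'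
  refine ⟨s.toList.get, ?_⟩
  rw [Fin.univ_val_map, List.ofFn_get, Multiset.coe_toList]

/-- deletion identity -/
lemma delD {m : ℕ} (u : Finset (Fin m)) (x : Fin m → ℝ) (r : ℕ) :
    ∑ i ∈ u, ∑ s ∈ (u.erase i).powersetCard r, ∏ l ∈ s, x l
      = ((u.card - r : ℕ) : ℝ) * ∑ s ∈ u.powersetCard r, ∏ l ∈ s, x l := by
  rw [Finset.sum_comm' (s' := fun s => u \ s) (t' := u.powersetCard r) ?_]
  · rw [Finset.mul_sum]
    refine Finset.sum_congr rfl fun s hs => ?_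
    rw [Finset.sum_const, nsmul_eq_mul]
    congr 2
    rw [Finset.mem_powersetCard] at hs
    rw [Finset.card_sdiff_of_subset hs.1, hs.2]
  · intro i s
    simp only [Finset.mem_powersetCard, Finset.subset_erase, Finset.mem_sdiff]
    tauto

lemma id1' {m : ℕ} (u : Finset (Fin m)) (x : Fin m → ℝ) (hu : 1 ≤ u.card) :
    ∑ i ∈ u, ∏ l ∈ u.erase i, x l
      = ∑ s ∈ u.powersetCard (u.card - 1), ∏ l ∈ s, x l := by
  have h := delD u x (u.card - 1)
  have h2 : u.card - (u.card - 1) = 1 := by omega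
  rw [h2] at h
  rw [Nat.cast_one, one_mul] at h
  rw [← h]
  refine Finset.sum_congr rfl fun i hi => ?_
  have hc : (u.erase i).card = u.card - 1 := Finset.card_erase_of_mem hi
  rw [← hc, Finset.powersetCard_self, Finset.sum_singleton]

lemma esymm_top (m : ℕ) (x : Fin m → ℝ) : esymmR m x m = ∏ i, x i := by
  unfold esymmR
  have h1 : Finset.powersetCard m (Finset.univ : Finset (Fin m)) = {Finset.univ} := by
    ext s
    simp only [Finset.mem_powersetCard, Finset.mem_singleton]
    constructor
    · rintro ⟨-, hc⟩; exact Finset.eq_univ_of_card s (by simpa using hc)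
    · rintro rfl; exact ⟨Finset.Subset.refl _, by simp⟩
  rw [h1, Finset.sum_singleton]

lemma id1'' (μ : ℕ) (u : Finset (Fin (μ + 2))) (x : Fin (μ + 2) → ℝ) (c : ℕ) (hu : u.card = c + 1) :
    ∑ i ∈ u, ∏ l ∈ u.erase i, x l = ∑ s ∈ u.powersetCard c, ∏ l ∈ s, x l := by
  have h := id1' u x (by omega)
  rwa [hu, Nat.add_sub_cancel] at h

lemma e1 (μ : ℕ) (x : Fin (μ + 2) → ℝ) :
    esymmR (μ + 2) x (μ + 1) = ∑ i, ∏ l ∈ Finset.univ.erase i, x l := by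
  have h := id1'' μ Finset.univ x (μ + 1) (by simp)
  rw [h]; rfl

lemma e2 (μ : ℕ) (x : Fin (μ + 2) → ℝ) :
    ∑ i, ∑ j ∈ Finset.univ.erase i,
        ((∏ l ∈ Finset.univ.erase i, x l) * ∏ l ∈ Finset.univ.erase j, x l)
      = 2 * (esymmR (μ + 2) x (μ + 2) * esymmR (μ + 2) x μ) := by
  have key : ∀ i : Fin (μ + 2), ∀ j ∈ Finset.univ.erase i,
      (∏ l ∈ Finset.univ.erase i, x l) * ∏ l ∈ Finset.univ.erase j, x l
        = esymmR (μ + 2) x (μ + 2) * ∏ l ∈ (Finset.univ.erase i).erase j, x l := by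
    intro i j hj
    have hji : j ≠ i := Finset.ne_of_mem_erase hj
    have h1 : x j * ∏ l ∈ (Finset.univ.erase i).erase j, x l = ∏ l ∈ Finset.univ.erase i, x l :=
      Finset.mul_prod_erase _ _ hj
    have h2 : x i * ∏ l ∈ (Finset.univ.erase j).erase i, x l = ∏ l ∈ Finset.univ.erase j, x l :=
      Finset.mul_prod_erase _ _ (Finset.mem_erase.2 ⟨Ne.symm hji, Finset.mem_univ i⟩)
    have h3 : x i * ∏ l ∈ Finset.univ.erase i, x l = ∏ l, x l :=
      Finset.mul_prod_erase _ _ (Finset.mem_univ i)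
    have h4 : (Finset.univ.erase j).erase i = (Finset.univ.erase i).erase j :=
      Finset.erase_right_comm
    rw [esymm_top, ← h3, ← h1, ← h2, h4]
    ring
  calc ∑ i, ∑ j ∈ Finset.univ.erase i,
        ((∏ l ∈ Finset.univ.erase i, x l) * ∏ l ∈ Finset.univ.erase j, x l)
      = ∑ i : Fin (μ+2), ∑ j ∈ Finset.univ.erase i,
          esymmR (μ + 2) x (μ + 2) * ∏ l ∈ (Finset.univ.erase i).erase j, x l := by
        refine Finset.sum_congr rfl fun i _ => Finset.sum_congr rfl fun j hj => key i j hj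
    _ = esymmR (μ + 2) x (μ + 2) * ∑ i : Fin (μ+2), ∑ j ∈ Finset.univ.erase i,
          ∏ l ∈ (Finset.univ.erase i).erase j, x l := by
        rw [Finset.mul_sum]; exact Finset.sum_congr rfl fun i _ => (Finset.mul_sum _ _ _).symm
    _ = 2 * (esymmR (μ + 2) x (μ + 2) * esymmR (μ + 2) x μ) := by
        have inner : ∀ i : Fin (μ+2), ∑ j ∈ Finset.univ.erase i,
            ∏ l ∈ (Finset.univ.erase i).erase j, x l
              = ∑ s ∈ (Finset.univ.erase i).powersetCard μ, ∏ l ∈ s, x l := by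
          intro i
          exact id1'' μ (Finset.univ.erase i) x μ
            (by rw [Finset.card_erase_of_mem (Finset.mem_univ i)]; simp)
        rw [Finset.sum_congr rfl fun i _ => inner i]
        have h := delD (Finset.univ : Finset (Fin (μ+2))) x μ
        have hc : (Finset.univ : Finset (Fin (μ+2))).card = μ + 2 := by simp
        rw [hc] at h
        have h2 : μ + 2 - μ = 2 := by omega
        rw [h2] at h
        rw [h]
        unfold esymmR
        push_cast
        ring

lemma chooseSucc (μ : ℕ) : (μ+2).choose (μ+1) = μ+2 := by
  have := Nat.choose_symm (n := μ+2) (k := 1) (by omega)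
  simpa using this

lemma choose2 (μ : ℕ) : 2 * ((μ+2).choose μ) = (μ+2)*(μ+1) := by
  induction μ with
  | zero => rfl
  | succ ν ih =>
    have h : (ν+1+2).choose (ν+1) = (ν+2).choose ν + (ν+2).choose (ν+1) :=
      Nat.choose_succ_succ _ _
    have h2 : (ν+2).choose (ν+1) = ν+2 := chooseSucc ν
    rw [h, h2]
    nlinarith [ih]

lemma expandSq (μ : ℕ) (x : Fin (μ+2) → ℝ) :
    (∑ i, ∏ l ∈ Finset.univ.erase i, x l)^2
      = (∑ i, (∏ l ∈ Finset.univ.erase i, x l)^2)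
        + 2*(esymmR (μ+2) x (μ+2) * esymmR (μ+2) x μ) := by
  rw [← e2 μ x]
  rw [sq, Finset.sum_mul_sum]
  rw [← Finset.sum_add_distrib]
  refine Finset.sum_congr rfl fun i _ => ?_
  rw [sq]
  exact (Finset.add_sum_erase _ _ (Finset.mem_univ i)).symm

lemma top_newton (μ : ℕ) (x : Fin (μ+2) → ℝ) :
    Hnorm (μ+2) x μ * Hnorm (μ+2) x (μ+2) ≤ Hnorm (μ+2) x (μ+1) ^ 2 := by
  have hZ : esymmR (μ+2) x (μ+1) = ∑ i, ∏ l ∈ Finset.univ.erase i, x l := e1 μ x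
  set Z : ℝ := ∑ i, ∏ l ∈ Finset.univ.erase i, x l with hZdef
  set Q : ℝ := ∑ i : Fin (μ+2), (∏ l ∈ Finset.univ.erase i, x l)^2 with hQdef
  have hexp : Z^2 = Q + 2*(esymmR (μ+2) x (μ+2) * esymmR (μ+2) x μ) := expandSq μ x
  have cauchy : Z^2 ≤ ((μ:ℝ)+2) * Q := by
    have h := sq_sum_le_card_mul_sum_sq (s := (Finset.univ : Finset (Fin (μ+2))))
      (f := fun i => ∏ l ∈ Finset.univ.erase i, x l)
    simpa [hZdef, hQdef] using h
  have hc2 : ((μ+2).choose μ : ℝ) * 2 = ((μ:ℝ)+2)*((μ:ℝ)+1) := by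
    have h := choose2 μ
    have h' : ((2 * ((μ+2).choose μ) : ℕ) : ℝ) = (((μ+2)*(μ+1) : ℕ) : ℝ) := by rw [h]
    push_cast at h'
    linarith
  have hc2pos : (0:ℝ) < ((μ+2).choose μ : ℝ) := by
    have : 0 < (μ+2).choose μ := Nat.choose_pos (by omega)
    exact_mod_cast this
  unfold Hnorm
  rw [chooseSucc, Nat.choose_self, hZ]
  push_cast
  rw [div_pow, div_mul_div_comm, div_le_div_iff₀ (by positivity) (by positivity)]
  nlinarith [cauchy, hexp, hc2, sq_nonneg Z, hc2pos]

lemma top_vanish (μ : ℕ) (x : Fin (μ+2) → ℝ) (h0 : esymmR (μ+2) x μ = 0)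
    (h1 : esymmR (μ+2) x (μ+1) = 0) : esymmR (μ+2) x (μ+2) = 0 := by
  have hZ : esymmR (μ+2) x (μ+1) = ∑ i, ∏ l ∈ Finset.univ.erase i, x l := e1 μ x
  have hexp := expandSq μ x
  rw [← hZ, h1, h0, mul_zero, mul_zero, add_zero] at hexp
  have hQ : ∑ i : Fin (μ+2), (∏ l ∈ Finset.univ.erase i, x l)^2 = 0 := by
    rw [← hexp]; simp
  have hz0 : ∀ i : Fin (μ+2), (∏ l ∈ Finset.univ.erase i, x l) = 0 := by
    intro i
    have h := (Finset.sum_eq_zero_iff_of_nonneg (fun j _ => sq_nonneg _)).1 hQ i (Finset.mem_univ i)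
    exact pow_eq_zero_iff (by norm_num) |>.1 h
  rw [esymm_top]
  have h3 : x 0 * ∏ l ∈ Finset.univ.erase 0, x l = ∏ i, x i :=
    Finset.mul_prod_erase _ _ (Finset.mem_univ 0)
  rw [← h3, hz0 0, mul_zero]

open Polynomial in
lemma derivStep (s : Multiset ℝ) (hm : 1 ≤ Multiset.card s) :
    ∃ s' : Multiset ℝ, Multiset.card s' = Multiset.card s - 1 ∧
      ∀ r, r ≤ Multiset.card s - 1 →
        (Multiset.card s : ℝ) * s'.esymm r
          = ((Multiset.card s - r : ℕ) : ℝ) * s.esymm r := by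
  set m := Multiset.card s with hmdef
  set p : Polynomial ℝ := (s.map fun t => X - C t).prod with hp
  have hmonic : p.Monic :=
    monic_multiset_prod_of_monic _ _ (fun t _ => monic_X_sub_C t)
  have hdeg : p.natDegree = m := natDegree_multiset_prod_X_sub_C_eq_card s
  have hroots : p.roots = s := roots_multiset_prod_X_sub_C s
  set q := derivative p with hq
  have hqdeg_le : q.natDegree ≤ m - 1 := by
    have := natDegree_derivative_le p
    rw [← hq] at this
    omega
  have hcard_ge : m - 1 ≤ Multiset.card q.roots := by
    have := card_roots_le_derivative p
    rw [← hq] at this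
    rw [hroots] at this
    omega
  have hcard_le : Multiset.card q.roots ≤ q.natDegree := card_roots' q
  have hqdeg : q.natDegree = m - 1 := by omega
  have hqcard : Multiset.card q.roots = q.natDegree := by omega
  have hpm : p.coeff m = 1 := by
    rw [← hdeg]
    exact hmonic
  have hlead : q.leadingCoeff = (m : ℝ) := by
    rw [Polynomial.leadingCoeff, hqdeg, hq, Polynomial.coeff_derivative]
    have e1 : m - 1 + 1 = m := by omega
    rw [e1, hpm, one_mul]
    norm_cast
  refine ⟨q.roots, by omega, fun r hr => ?_⟩
  have h1 : q.coeff (m - 1 - r)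
      = q.leadingCoeff * (-1) ^ (q.natDegree - (m - 1 - r))
        * q.roots.esymm (q.natDegree - (m - 1 - r)) :=
    Polynomial.coeff_eq_esymm_roots_of_card hqcard (by omega)
  have e2 : q.natDegree - (m - 1 - r) = r := by omega
  rw [e2, hlead] at h1
  have h2 : q.coeff (m - 1 - r) = p.coeff (m - 1 - r + 1) * ((m - 1 - r : ℕ) + 1 : ℝ) := by
    rw [hq, Polynomial.coeff_derivative]
  have e3 : m - 1 - r + 1 = m - r := by omega
  rw [e3] at h2
  have h3 : p.coeff (m - r) = (-1) ^ (m - (m - r)) * s.esymm (m - (m - r)) := by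
    have := Multiset.prod_X_sub_C_coeff s (k := m - r) (by omega)
    rw [← hmdef] at this
    exact this
  have e4 : m - (m - r) = r := by omega
  rw [e4] at h3
  have e5 : ((m - 1 - r : ℕ) + 1 : ℝ) = ((m - r : ℕ) : ℝ) := by
    have : ((m - 1 - r : ℕ) : ℝ) + 1 = ((m - r : ℕ) : ℝ) := by
      have := e3
      push_cast [← this]
      ring
    exact_mod_cast this
  rw [h2, h3, e5] at h1
  have hne : ((-1 : ℝ)) ^ r ≠ 0 := by simp
  refine mul_left_cancel₀ hne ?_
  linear_combination -h1

noncomputable def HmM (s : Multiset ℝ) (r : ℕ) : ℝ :=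
  s.esymm r / ((Multiset.card s).choose r : ℝ)

lemma HmM_map {n : ℕ} {x : Fin n → ℝ} {s : Multiset ℝ}
    (h : Multiset.map x Finset.univ.val = s) (r : ℕ) : HmM s r = Hnorm n x r := by
  have hc : Multiset.card s = n := by rw [← h]; simp
  rw [HmM, Hnorm, esymmR_eq, h, hc]

lemma esymm_zero_of_lt {s : Multiset ℝ} {r : ℕ} (h : Multiset.card s < r) :
    s.esymm r = 0 := by
  rw [Multiset.esymm, Multiset.powersetCard_eq_empty r h]
  simp

lemma chooseRel (m r : ℕ) (h1 : 1 ≤ m) : m * ((m - 1).choose r) = m.choose (r+1) * (r+1) := by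
  obtain ⟨m', rfl⟩ : ∃ m', m = m' + 1 := ⟨m - 1, by omega⟩
  have := Nat.add_one_mul_choose_eq m' r
  simpa using this

lemma chooseRel2 (m r : ℕ) (h1 : 1 ≤ m) :
    (m : ℝ) * (((m - 1).choose r : ℕ) : ℝ) = ((m - r : ℕ) : ℝ) * (m.choose r : ℝ) := by
  have h := chooseRel m r h1
  have h2 : m.choose (r+1) * (r+1) = m.choose r * (m - r) := Nat.choose_succ_right_eq m r
  have h3 : m * ((m - 1).choose r) = m.choose r * (m - r) := h.trans h2
  have h4 : ((m * ((m - 1).choose r) : ℕ) : ℝ) = ((m.choose r * (m - r) : ℕ) : ℝ) := by rw [h3]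
  push_cast at h4
  linarith

lemma vanishM (N : ℕ) : ∀ s : Multiset ℝ, Multiset.card s ≤ N → ∀ j : ℕ,
    s.esymm j = 0 → s.esymm (j+1) = 0 → s.esymm (j+2) = 0 := by
  induction N with
  | zero =>
    intro s hs j _ _
    exact esymm_zero_of_lt (by omega)
  | succ N ih =>
    intro s hs j h0 h1
    rcases lt_trichotomy (Multiset.card s) (j+2) with hc | hc | hc
    · exact esymm_zero_of_lt hc
    · obtain ⟨x, hx⟩ := exists_fn s (j+2) hc
      have hr : ∀ r, s.esymm r = esymmR (j+2) x r := by
        intro r; rw [esymmR_eq, hx]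
      rw [hr] at h0 h1 ⊢
      exact top_vanish j x h0 h1
    · set m := Multiset.card s with hm
      obtain ⟨s', hcard, hrel⟩ := derivStep s (by omega)
      have hmne : (m : ℝ) ≠ 0 := by
        have : 0 < m := by omega
        exact_mod_cast this.ne'
      have h0' : s'.esymm j = 0 := by
        have := hrel j (by omega)
        rw [h0, mul_zero] at this
        exact (mul_eq_zero.1 this).resolve_left hmne
      have h1' : s'.esymm (j+1) = 0 := by
        have := hrel (j+1) (by omega)
        rw [h1, mul_zero] at this
        exact (mul_eq_zero.1 this).resolve_left hmne
      have h2' := ih s' (by omega) j h0' h1'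
      have := hrel (j+2) (by omega)
      rw [h2', mul_zero] at this
      have hne2 : ((m - (j+2) : ℕ) : ℝ) ≠ 0 := by
        have : 0 < m - (j+2) := by omega
        exact_mod_cast this.ne'
      exact (mul_eq_zero.1 this.symm).resolve_left hne2

lemma newtonM (N : ℕ) : ∀ s : Multiset ℝ, Multiset.card s ≤ N → ∀ j : ℕ,
    HmM s j * HmM s (j+2) ≤ HmM s (j+1)^2 := by
  induction N with
  | zero =>
    intro s hs j
    have : HmM s (j+2) = 0 := by
      rw [HmM, Nat.choose_eq_zero_of_lt (by omega)]
      simp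
    rw [this, mul_zero]
    exact sq_nonneg _
  | succ N ih =>
    intro s hs j
    rcases lt_trichotomy (Multiset.card s) (j+2) with hc | hc | hc
    · have : HmM s (j+2) = 0 := by
        rw [HmM, Nat.choose_eq_zero_of_lt (by omega)]
        simp
      rw [this, mul_zero]
      exact sq_nonneg _
    · obtain ⟨x, hx⟩ := exists_fn s (j+2) hc
      rw [HmM_map hx, HmM_map hx, HmM_map hx]
      exact top_newton j x
    · set m := Multiset.card s with hm
      obtain ⟨s', hcard, hrel⟩ := derivStep s (by omega)
      have hmne : (0:ℝ) < (m : ℝ) := by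
        have : 0 < m := by omega
        exact_mod_cast this
      have hH : ∀ r, r ≤ m - 1 → HmM s' r = HmM s r := by
        intro r hr
        rw [HmM, HmM, hcard, ← hm]
        have hA := hrel r hr
        have hB := chooseRel2 m r (by omega)
        have hC1 : (0:ℝ) < (((m-1).choose r : ℕ) : ℝ) := by
          have : 0 < (m-1).choose r := Nat.choose_pos (by omega)
          exact_mod_cast this
        have hC2 : (0:ℝ) < ((m.choose r : ℕ) : ℝ) := by
          have : 0 < m.choose r := Nat.choose_pos (by omega)
          exact_mod_cast this
        rw [div_eq_div_iff hC1.ne' hC2.ne']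
        refine mul_left_cancel₀ hmne.ne' ?_
        linear_combination ((m.choose r : ℕ) : ℝ) * hA - s.esymm r * hB
      rw [← hH j (by omega), ← hH (j+1) (by omega), ← hH (j+2) (by omega)]
      exact ih s' (by omega) j

lemma newtonF (m : ℕ) (x : Fin m → ℝ) (j : ℕ) :
    Hnorm m x j * Hnorm m x (j+2) ≤ Hnorm m x (j+1)^2 := by
  have hx : Multiset.map x Finset.univ.val = Multiset.map x Finset.univ.val := rfl
  rw [← HmM_map hx, ← HmM_map hx, ← HmM_map hx]
  exact newtonM _ _ le_rfl j

lemma vanishF (m : ℕ) (x : Fin m → ℝ) (j : ℕ) (h0 : esymmR m x j = 0)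
    (h1 : esymmR m x (j+1) = 0) : esymmR m x (j+2) = 0 := by
  rw [esymmR_eq] at h0 h1 ⊢
  exact vanishM _ _ le_rfl j h0 h1

lemma Hnorm_zero (m : ℕ) (x : Fin m → ℝ) : Hnorm m x 0 = 1 := by
  simp [Hnorm, esymmR]


/-- If `σ_m(λ) ≥ 0` for `1 ≤ m ≤ k`, `1 ≤ l < k ≤ n-2`, and nonnegative constants satisfy
`Σ_{i=0}^{l-1} a_i H_i = Σ_{j=l}^{k} b_j H_j > 0`, then
`Σ_{j=l}^{k} b_j H_{j+1} ≤ Σ_{i=0}^{l-1} a_i H_{i+1}`. -/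
theorem stmt_5 (n : ℕ) (hn : 3 ≤ n) (l k : ℕ) (hl : 1 ≤ l) (hlk : l < k) (hk : k ≤ n - 2)
    (lam : Fin (n - 1) → ℝ)
    (hσ : ∀ m : ℕ, 1 ≤ m → m ≤ k → 0 ≤ esymmR (n - 1) lam m)
    (a b : ℕ → ℝ)
    (ha : ∀ i ∈ Finset.range l, 0 ≤ a i)
    (hb : ∀ j ∈ Finset.Icc l k, 0 ≤ b j)
    (heq : ∑ i ∈ Finset.range l, a i * Hnorm (n - 1) lam i =
           ∑ j ∈ Finset.Icc l k, b j * Hnorm (n - 1) lam j)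
    (hpos : 0 < ∑ j ∈ Finset.Icc l k, b j * Hnorm (n - 1) lam j) :
    ∑ j ∈ Finset.Icc l k, b j * Hnorm (n - 1) lam (j + 1) ≤
      ∑ i ∈ Finset.range l, a i * Hnorm (n - 1) lam (i + 1) := by
  set H : ℕ → ℝ := Hnorm (n - 1) lam with hH
  have hHnn : ∀ r, r ≤ k → 0 ≤ H r := by
    intro r hr
    rcases Nat.eq_zero_or_pos r with rfl | hr1
    · rw [hH, Hnorm_zero]; norm_num
    · exact div_nonneg (hσ r hr1 hr) (Nat.cast_nonneg _)
  have hCne : ∀ r, r ≤ n - 1 → ((n-1).choose r : ℝ) ≠ 0 := by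
    intro r hr
    have : 0 < (n-1).choose r := Nat.choose_pos hr
    exact_mod_cast this.ne'
  have hEz : ∀ r, r ≤ n - 1 → H r = 0 → esymmR (n-1) lam r = 0 := by
    intro r hr h
    rw [hH, Hnorm, div_eq_zero_iff] at h
    exact h.resolve_right (hCne r hr)
  have cross : ∀ i, i + 1 ≤ l → ∀ j, i ≤ j → j ≤ k → H i * H (j+1) ≤ H (i+1) * H j := by
    intro i hi j hij
    induction j, hij using Nat.le_induction with
    | base => intro _; rw [mul_comm]
    | succ j hij IH =>
      intro hj1k
      have hIH := IH (by omega)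
      have hnewton : H j * H (j+2) ≤ H (j+1)^2 := newtonF (n-1) lam j
      by_cases hsign : H (j+2) ≤ 0
      · have hle : H i * (H (j+1+1)) ≤ 0 :=
          mul_nonpos_of_nonneg_of_nonpos (hHnn i (by omega)) hsign
        have hge : 0 ≤ H (i+1) * H (j+1) :=
          mul_nonneg (hHnn (i+1) (by omega)) (hHnn (j+1) hj1k)
        calc H i * H (j+1+1) ≤ 0 := hle
          _ ≤ H (i+1) * H (j+1) := hge
      · push_neg at hsign
        by_cases hj1 : H (j+1) = 0
        · exfalso
          have hjz : H j = 0 := by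
            have h1 : H j * H (j+2) ≤ 0 := by
              calc H j * H (j+2) ≤ H (j+1)^2 := hnewton
                _ = 0 := by rw [hj1]; ring
            have h2 : 0 ≤ H j * H (j+2) := mul_nonneg (hHnn j (by omega)) hsign.le
            have h3 : H j * H (j+2) = 0 := le_antisymm h1 h2
            exact (mul_eq_zero.1 h3).resolve_right hsign.ne'
          have e0 : esymmR (n-1) lam j = 0 := hEz j (by omega) hjz
          have e1 : esymmR (n-1) lam (j+1) = 0 := hEz (j+1) (by omega) hj1
          have e2 : esymmR (n-1) lam (j+2) = 0 := vanishF (n-1) lam j e0 e1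
          have : H (j+2) = 0 := by rw [hH, Hnorm, e2, zero_div]
          rw [this] at hsign
          exact lt_irrefl 0 hsign
        · have hj1pos : 0 < H (j+1) :=
            lt_of_le_of_ne (hHnn (j+1) hj1k) (Ne.symm hj1)
          have hstep : (H i * H (j+2)) * H (j+1) ≤ (H (i+1) * H (j+1)) * H (j+1) := by
            calc (H i * H (j+2)) * H (j+1) = (H i * H (j+1)) * H (j+2) := by ring
              _ ≤ (H (i+1) * H j) * H (j+2) := mul_le_mul_of_nonneg_right hIH hsign.le
              _ = H (i+1) * (H j * H (j+2)) := by ring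
              _ ≤ H (i+1) * H (j+1)^2 :=
                  mul_le_mul_of_nonneg_left hnewton (hHnn (i+1) (by omega))
              _ = (H (i+1) * H (j+1)) * H (j+1) := by ring
          exact le_of_mul_le_mul_right hstep hj1pos
  have key : (∑ j ∈ Finset.Icc l k, b j * H (j+1)) * (∑ i ∈ Finset.range l, a i * H i)
      ≤ (∑ i ∈ Finset.range l, a i * H (i+1)) * (∑ j ∈ Finset.Icc l k, b j * H j) := by
    rw [Finset.sum_mul_sum, Finset.sum_mul_sum, Finset.sum_comm]
    refine Finset.sum_le_sum fun i hi => Finset.sum_le_sum fun j hj => ?_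
    have hil : i + 1 ≤ l := Finset.mem_range.1 hi
    have hjlk := Finset.mem_Icc.1 hj
    have hcr := cross i hil j (by omega) hjlk.2
    calc (b j * H (j+1)) * (a i * H i) = (a i * b j) * (H i * H (j+1)) := by ring
      _ ≤ (a i * b j) * (H (i+1) * H j) :=
          mul_le_mul_of_nonneg_left hcr (mul_nonneg (ha i hi) (hb j hj))
      _ = (a i * H (i+1)) * (b j * H j) := by ring
  rw [heq] at key
  exact le_of_mul_le_mul_right key hpos
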